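/- For N even, the map Γ(N) → M₂(𝔽₂) sending A = I + N·B + 2N·C (with B ∈ M₂(𝔽₂), i.e., B the mod-2 reduction of (A−I)/N, and C integral) to B is a group homomorphism with kernel Γ(2N), and its image is exactly the set of trace-zero matrices in M₂(𝔽₂); hence Γ(N)/Γ(2N) ≅ (ℤ/2)³. -/

import Mathlib

/-!
Write `A ∈ Γ(N)` as `1 + N • X` with `X` integral, so that `phi N A` is the reduction of `X`.
Since `(1 + N • X) (1 + N • Y) = 1 + N • (X + Y + N • X Y)`, `phi N` is additive once `N` is
even, and its kernel consists of those `A` with `X ≡ 0 mod 2`, i.e. `Γ(2N)`. Expanding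
`det (1 + N • X) = 1 + N tr X + N² det X = 1` gives `tr X = -N det X`, which is even.
Conversely `1 + N • X ∈ Γ(N)` whenever `tr X = det X = 0`, and the reductions of three such
matrices span the trace-zero matrices over `𝔽₂`.
-/

open Matrix CongruenceSubgroup
open scoped MatrixGroups

/-- For A ∈ Γ(N), the mod-2 reduction of (A - I)/N. -/
def phi (N : ℕ) (A : SL(2, ℤ)) : Matrix (Fin 2) (Fin 2) (ZMod 2) :=
  Matrix.of fun i j =>
    ((((A : Matrix (Fin 2) (Fin 2) ℤ) i j - (1 : Matrix (Fin 2) (Fin 2) ℤ) i j) / (N : ℤ) :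
      ℤ) : ZMod 2)

instance gammaComapNormal (N : ℕ) :
    (Subgroup.comap (Gamma N).subtype (Gamma (2 * N))).Normal :=
  (Gamma_normal (2 * N)).comap _

namespace Matrix

variable {R : Type*} [CommRing R]

theorem det_one_add_smul_fin_two (c : R) (X : Matrix (Fin 2) (Fin 2) R) :
    det (1 + c • X) = 1 + c * trace X + c ^ 2 * det X := by
  simp only [det_fin_two, trace_fin_two, add_apply, smul_apply, smul_eq_mul, one_apply_eq,
    one_apply_ne Fin.zero_ne_one, one_apply_ne Fin.zero_ne_one.symm]
  ring

theorem eq_of_trace_eq_zero_fin_two {B : Matrix (Fin 2) (Fin 2) R} (h : trace B = 0) :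
    B = !![B 0 0, B 0 1; B 1 0, -B 0 0] := by
  rw [trace_fin_two, add_eq_zero_iff_eq_neg'] at h
  ext i j
  fin_cases i <;> fin_cases j <;> simp [h]

theorem eq_zero_iff_of_trace_eq_zero_fin_two {B : Matrix (Fin 2) (Fin 2) R} (h : trace B = 0) :
    B = 0 ↔ B 0 0 = 0 ∧ B 0 1 = 0 ∧ B 1 0 = 0 := by
  refine ⟨fun hB => by simp [hB], fun ⟨h00, h01, h10⟩ => ?_⟩
  rw [eq_of_trace_eq_zero_fin_two h, h00, h01, h10, neg_zero]
  ext i j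
  fin_cases i <;> fin_cases j <;> rfl

end Matrix

namespace CongruenceSubgroup

variable {N : ℕ} {A : SL(2, ℤ)}

theorem mem_Gamma_iff_dvd :
    A ∈ Gamma N ↔ ∀ i j, (N : ℤ) ∣ ((A : Matrix (Fin 2) (Fin 2) ℤ) - 1) i j := by
  simp [Gamma_mem, Fin.forall_fin_two, ← ZMod.intCast_zmod_eq_zero_iff_dvd, sub_eq_zero,
    and_assoc]

theorem mem_Gamma_iff_exists_eq_one_add_smul :
    A ∈ Gamma N ↔
      ∃ X : Matrix (Fin 2) (Fin 2) ℤ, (A : Matrix (Fin 2) (Fin 2) ℤ) = 1 + (N : ℤ) • X := by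
  rw [mem_Gamma_iff_dvd]
  constructor
  · intro h
    choose X hX using h
    exact ⟨Matrix.of X, by ext i j; simp [← hX]⟩
  · rintro ⟨X, hX⟩ i j
    simp only [hX, add_sub_cancel_left, Matrix.smul_apply, smul_eq_mul]
    exact dvd_mul_right _ _

end CongruenceSubgroup

section phi

variable {N : ℕ} {A B : SL(2, ℤ)}

theorem phi_eq_map_of_eq_one_add_smul (hN : N ≠ 0) {X : Matrix (Fin 2) (Fin 2) ℤ}
    (hX : (A : Matrix (Fin 2) (Fin 2) ℤ) = 1 + (N : ℤ) • X) : phi N A = X.map Int.cast := by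
  ext i j
  simp only [phi, of_apply, map_apply, hX, Matrix.add_apply, Matrix.smul_apply, smul_eq_mul,
    add_sub_cancel_left, Int.mul_ediv_cancel_left _ (Int.natCast_ne_zero.2 hN)]

theorem phi_mul (hN : Even N) (hN0 : N ≠ 0) (hA : A ∈ Gamma N) (hB : B ∈ Gamma N) :
    phi N (A * B) = phi N A + phi N B := by
  obtain ⟨X, hX⟩ := mem_Gamma_iff_exists_eq_one_add_smul.1 hA
  obtain ⟨Y, hY⟩ := mem_Gamma_iff_exists_eq_one_add_smul.1 hB
  have hAB : ((A * B : SL(2, ℤ)) : Matrix (Fin 2) (Fin 2) ℤ) =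
      1 + (N : ℤ) • (X + Y + (N : ℤ) • (X * Y)) := by
    rw [show ((A * B : SL(2, ℤ)) : Matrix (Fin 2) (Fin 2) ℤ) = A * B from rfl, hX, hY]
    simp only [add_mul, mul_add, one_mul, mul_one, smul_mul_smul_comm, smul_add, smul_smul]
    abel
  have hN2 : ((N : ℤ) : ZMod 2) = 0 :=
    (ZMod.intCast_zmod_eq_zero_iff_dvd _ 2).2 (by exact_mod_cast hN.two_dvd)
  rw [phi_eq_map_of_eq_one_add_smul hN0 hAB, phi_eq_map_of_eq_one_add_smul hN0 hX,
    phi_eq_map_of_eq_one_add_smul hN0 hY]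
  ext i j
  simp only [map_apply, Matrix.add_apply, Matrix.smul_apply, smul_eq_mul, Int.cast_add,
    Int.cast_mul, hN2, zero_mul, add_zero]

theorem phi_eq_zero_iff (hN0 : N ≠ 0) (hA : A ∈ Gamma N) :
    phi N A = 0 ↔ A ∈ Gamma (2 * N) := by
  obtain ⟨X, hX⟩ := mem_Gamma_iff_exists_eq_one_add_smul.1 hA
  rw [phi_eq_map_of_eq_one_add_smul hN0 hX, mem_Gamma_iff_dvd, hX, add_sub_cancel_left,
    ← Matrix.ext_iff]
  refine forall₂_congr fun i j => ?_
  simp [ZMod.intCast_zmod_eq_zero_iff_dvd, mul_comm 2, Int.mul_dvd_mul_iff_left, hN0]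

theorem trace_phi (hN : Even N) (hN0 : N ≠ 0) (hA : A ∈ Gamma N) : trace (phi N A) = 0 := by
  obtain ⟨X, hX⟩ := mem_Gamma_iff_exists_eq_one_add_smul.1 hA
  have hdet : (N : ℤ) * (trace X + N * det X) = 0 := by
    have := A.det_coe
    rw [hX, det_one_add_smul_fin_two] at this
    linear_combination this
  have htr : trace X = -(N * det X) :=
    eq_neg_of_add_eq_zero_left ((mul_eq_zero.1 hdet).resolve_left (by exact_mod_cast hN0))
  have hN2 : ((N : ℤ) : ZMod 2) = 0 :=
    (ZMod.intCast_zmod_eq_zero_iff_dvd _ 2).2 (by exact_mod_cast hN.two_dvd)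
  calc trace (phi N A) = ((trace X : ℤ) : ZMod 2) := by
        rw [phi_eq_map_of_eq_one_add_smul hN0 hX]
        exact (AddMonoidHom.map_trace (Int.castAddHom (ZMod 2)) X).symm
    _ = 0 := by rw [htr, Int.cast_neg, Int.cast_mul, hN2, zero_mul, neg_zero]

theorem exists_mem_Gamma_phi_eq_map (hN0 : N ≠ 0) {X : Matrix (Fin 2) (Fin 2) ℤ}
    (htr : trace X = 0) (hdet : det X = 0) : ∃ A ∈ Gamma N, phi N A = X.map Int.cast := by
  let A : SL(2, ℤ) := ⟨1 + (N : ℤ) • X, by rw [det_one_add_smul_fin_two, htr, hdet]; ring⟩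
  exact ⟨A, mem_Gamma_iff_exists_eq_one_add_smul.2 ⟨X, rfl⟩,
    phi_eq_map_of_eq_one_add_smul hN0 rfl⟩

def phiAddHom (hN : Even N) (hN0 : N ≠ 0) :
    Additive (Gamma N) →+ Matrix (Fin 2) (Fin 2) (ZMod 2) :=
  AddMonoidHom.mk' (fun A => phi N A.toMul) fun A B => phi_mul hN hN0 A.toMul.2 B.toMul.2

theorem exists_mem_Gamma_phi_eq (hN : Even N) (hN0 : N ≠ 0) (x y z : ZMod 2) :
    ∃ A ∈ Gamma N, phi N A = !![x, y; z, x] := by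
  have mem_range {X : Matrix (Fin 2) (Fin 2) ℤ} (htr : trace X = 0) (hdet : det X = 0) :
      X.map Int.cast ∈ (phiAddHom hN hN0).range := by
    obtain ⟨A, hA, hphi⟩ := exists_mem_Gamma_phi_eq_map hN0 htr hdet
    exact ⟨Additive.ofMul ⟨A, hA⟩, hphi⟩
  have hdecomp : !![x, y; z, x] =
      x • (!![1, 1; -1, -1] : Matrix (Fin 2) (Fin 2) ℤ).map Int.cast +
      (x + y) • (!![0, 1; 0, 0] : Matrix (Fin 2) (Fin 2) ℤ).map Int.cast +
      (x + z) • (!![0, 0; 1, 0] : Matrix (Fin 2) (Fin 2) ℤ).map Int.cast := by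
    ext i j
    fin_cases i <;> fin_cases j <;> simp [← add_assoc, CharTwo.add_self_eq_zero]
  obtain ⟨A, hA⟩ : !![x, y; z, x] ∈ (phiAddHom hN hN0).range := by
    rw [hdecomp]
    refine add_mem (add_mem ?_ ?_) ?_ <;> refine zmod_smul_mem (mem_range ?_ ?_) _ <;>
      simp [trace_fin_two, det_fin_two]
  exact ⟨A.toMul, A.toMul.2, hA⟩

theorem exists_mem_Gamma_phi_eq_iff (hN : Even N) (hN0 : N ≠ 0)
    (B : Matrix (Fin 2) (Fin 2) (ZMod 2)) :
    (∃ A ∈ Gamma N, phi N A = B) ↔ trace B = 0 := by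
  refine ⟨fun ⟨A, hA, hB⟩ => hB ▸ trace_phi hN hN0 hA, fun h => ?_⟩
  rw [eq_of_trace_eq_zero_fin_two h, ZMod.neg_eq_self_mod_two]
  exact exists_mem_Gamma_phi_eq hN hN0 _ _ _

def phiEntriesHom (hN : Even N) (hN0 : N ≠ 0) :
    Gamma N →* Multiplicative (ZMod 2 × ZMod 2 × ZMod 2) :=
  AddMonoidHom.toMultiplicativeRight <|
    ((entryAddMonoidHom _ 0 0).prod
      ((entryAddMonoidHom _ 0 1).prod (entryAddMonoidHom _ 1 0))).comp (phiAddHom hN hN0)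

theorem phiEntriesHom_apply (hN : Even N) (hN0 : N ≠ 0) (A : Gamma N) :
    phiEntriesHom hN hN0 A = Multiplicative.ofAdd (phi N A 0 0, phi N A 0 1, phi N A 1 0) :=
  rfl

theorem ker_phiEntriesHom (hN : Even N) (hN0 : N ≠ 0) :
    (phiEntriesHom hN hN0).ker = Subgroup.comap (Gamma N).subtype (Gamma (2 * N)) := by
  ext A
  rw [MonoidHom.mem_ker, Subgroup.mem_comap, Subgroup.coe_subtype, ← phi_eq_zero_iff hN0 A.2,
    eq_zero_iff_of_trace_eq_zero_fin_two (trace_phi hN hN0 A.2), phiEntriesHom_apply]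
  simp

theorem phiEntriesHom_surjective (hN : Even N) (hN0 : N ≠ 0) :
    Function.Surjective (phiEntriesHom hN hN0) := by
  rintro ⟨x, y, z⟩
  obtain ⟨A, hA, hphi⟩ := exists_mem_Gamma_phi_eq hN hN0 x y z
  exact ⟨⟨A, hA⟩, by rw [phiEntriesHom_apply, hphi]; rfl⟩

noncomputable def quotientGammaTwoMulEquiv (hN : Even N) (hN0 : N ≠ 0) :
    (Gamma N ⧸ Subgroup.comap (Gamma N).subtype (Gamma (2 * N))) ≃*
      Multiplicative (ZMod 2 × ZMod 2 × ZMod 2) :=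
  (QuotientGroup.quotientMulEquivOfEq (ker_phiEntriesHom hN hN0).symm).trans
    (QuotientGroup.quotientKerEquivOfSurjective _ (phiEntriesHom_surjective hN hN0))

end phi

/-- For N even, the map A = I + N·B + 2N·C ↦ B is a homomorphism Γ(N) → M₂(𝔽₂)
with kernel Γ(2N) and image exactly the trace-zero matrices;
hence Γ(N)/Γ(2N) ≅ (ℤ/2)³. -/
theorem gamma_mod_two_gamma_structure (N : ℕ) (hN : Even N) (hpos : 0 < N) :
    (∀ A B : SL(2, ℤ), A ∈ Gamma N → B ∈ Gamma N → phi N (A * B) = phi N A + phi N B) ∧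
    (∀ A : SL(2, ℤ), A ∈ Gamma N → (phi N A = 0 ↔ A ∈ Gamma (2 * N))) ∧
    (∀ B : Matrix (Fin 2) (Fin 2) (ZMod 2),
      (∃ A ∈ Gamma N, phi N A = B) ↔ Matrix.trace B = 0) ∧
    Nonempty ((↥(Gamma N) ⧸ Subgroup.comap (Gamma N).subtype (Gamma (2 * N))) ≃*
      Multiplicative (ZMod 2 × ZMod 2 × ZMod 2)) :=
  ⟨fun _ _ hA hB => phi_mul hN hpos.ne' hA hB, fun _ hA => phi_eq_zero_iff hpos.ne' hA,
    exists_mem_Gamma_phi_eq_iff hN hpos.ne', ⟨quotientGammaTwoMulEquiv hN hpos.ne'⟩⟩
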